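/- Let p and s be natural numbers with 0 < s < p, let A : Matrix (Fin p) (Fin s) ℝ have rank s, let M be a symmetric positive definite p×p real matrix and let N be a symmetric positive semidefinite p×p real matrix. Then the function g : ℝ → ℝ defined by g(t) = -log(det(Aᵀ * ((1-t) • M + t • N)⁻¹ * A)) is differentiable at t = 0 with derivative g'(0) = trace(M⁻¹ * A * (Aᵀ * M⁻¹ * A)⁻¹ * Aᵀ * M⁻¹ * N) - s. -/

import Mathlib

/-!
Write `F t = (1 - t) • M + t • N` and `B = Aᵀ M⁻¹ A`, which is positive definite because `A` has
full column rank. By Jacobi's formula `(log det X)' = trace (X⁻¹ X')` and `(F⁻¹)' = -M⁻¹ (N - M) M⁻¹`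
at `t = 0`, so `g'(0) = trace (B⁻¹ Aᵀ M⁻¹ (N - M) M⁻¹ A)`; cycling the trace turns the `N`-part into
`trace (M⁻¹ A B⁻¹ Aᵀ M⁻¹ N)`, while the `M`-part is `trace (B⁻¹ B) = s`.
-/

open Matrix

namespace Matrix

variable {n : Type*} [Fintype n]

theorem mulVec_injective_of_rank_eq_card {K m : Type*} [Field K] {A : Matrix m n K}
    (hA : A.rank = Fintype.card n) : Function.Injective A.mulVec := by
  have hrank := A.mulVecLin.finrank_range_add_finrank_ker
  rw [Module.finrank_fintype_fun_eq_card] at hrank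
  change A.rank + _ = _ at hrank
  have hker : LinearMap.ker A.mulVecLin = ⊥ := Submodule.finrank_eq_zero.mp (by omega)
  exact LinearMap.ker_eq_bot.mp hker

theorem PosDef.transpose_mul_mul_of_rank_eq_card {m : Type*} [Fintype m] {M : Matrix m m ℝ}
    (hM : M.PosDef) {A : Matrix m n ℝ} (hA : A.rank = Fintype.card n) : (Aᵀ * M * A).PosDef := by
  simpa using hM.conjTranspose_mul_mul_same (mulVec_injective_of_rank_eq_card hA)

variable [DecidableEq n]

theorem det_updateCol_eq_sum_perm {R : Type*} [CommRing R] (B : Matrix n n R) (i : n)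
    (c : n → R) :
    (B.updateCol i c).det = ∑ σ : Equiv.Perm n,
      (Equiv.Perm.sign σ : R) * ((∏ j ∈ Finset.univ.erase i, B (σ j) j) * c (σ i)) := by
  rw [det_apply']
  refine Finset.sum_congr rfl fun σ _ => ?_
  rw [← Finset.mul_prod_erase _ _ (Finset.mem_univ i), mul_comm (updateCol B i c (σ i) i)]
  congr 2
  · exact Finset.prod_congr rfl fun j hj => by simp [Finset.ne_of_mem_erase hj]
  · simp

theorem sum_det_updateCol_eq_trace_adjugate_mul {R : Type*} [CommRing R] (B H : Matrix n n R) :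
    ∑ i, (B.updateCol i fun k => H k i).det = (adjugate B * H).trace := by
  simp only [← cramer_apply, cramer_eq_adjugate_mulVec, trace, diag, mul_apply, mulVec, dotProduct]

theorem hasDerivAt_det_of_entries {𝕜 : Type*} [NontriviallyNormedField 𝕜] {h : 𝕜 → Matrix n n 𝕜}
    {h' : Matrix n n 𝕜} {t : 𝕜} (hh : ∀ i j, HasDerivAt (fun t => h t i j) (h' i j) t) :
    HasDerivAt (fun t => (h t).det) (adjugate (h t) * h').trace t := by
  have hleibniz : HasDerivAt
      (fun t => ∑ σ : Equiv.Perm n, (Equiv.Perm.sign σ : 𝕜) * ∏ i, h t (σ i) i)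
      (∑ σ : Equiv.Perm n, (Equiv.Perm.sign σ : 𝕜) *
        ∑ i, (∏ j ∈ Finset.univ.erase i, h t (σ j) j) • h' (σ i) i) t :=
    HasDerivAt.fun_sum fun σ _ => (HasDerivAt.fun_finsetProd fun i _ => hh (σ i) i).const_mul _
  convert hleibniz using 1
  · simp only [det_apply']
  · simp only [← sum_det_updateCol_eq_trace_adjugate_mul, det_updateCol_eq_sum_perm, smul_eq_mul,
      Finset.mul_sum]
    exact Finset.sum_comm

theorem trace_inv_mul_transpose_mul_inv_sub_mul_inv_mul {R m : Type*} [CommRing R] [Fintype m]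
    [DecidableEq m] (A : Matrix m n R) (M N : Matrix m m R) [Invertible M]
    [Invertible (Aᵀ * M⁻¹ * A)] :
    ((Aᵀ * M⁻¹ * A)⁻¹ * (Aᵀ * (M⁻¹ * (N - M) * M⁻¹) * A)).trace
      = (M⁻¹ * A * (Aᵀ * M⁻¹ * A)⁻¹ * Aᵀ * M⁻¹ * N).trace - Fintype.card n := by
  have hMM : M⁻¹ * M * M⁻¹ = M⁻¹ := by rw [inv_mul_of_invertible, one_mul]
  calc _ = ((Aᵀ * M⁻¹ * A)⁻¹ * Aᵀ * M⁻¹ * N * (M⁻¹ * A)).trace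
        - ((Aᵀ * M⁻¹ * A)⁻¹ * (Aᵀ * M⁻¹ * A)).trace := by
        rw [Matrix.mul_sub, Matrix.sub_mul, hMM]
        simp only [Matrix.mul_sub, Matrix.sub_mul, trace_sub, Matrix.mul_assoc]
    _ = _ := by
        rw [trace_mul_comm, inv_mul_of_invertible, trace_one]
        simp only [Matrix.mul_assoc]

end Matrix

-- The statements below only see the entrywise topology of matrices; the `linftyOp` norm, which
-- induces it and makes matrices a normed algebra, is used inside the proofs.
attribute [local instance] Matrix.linftyOpNormedAddCommGroup Matrix.linftyOpNormedSpace
  Matrix.linftyOpNormedRing Matrix.linftyOpNormedAlgebra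

theorem HasDerivAt.matrix_const_mul_mul_const {𝕜 : Type*} [NontriviallyNormedField 𝕜]
    [CompleteSpace 𝕜] {l m n o : Type*} [Fintype l] [Fintype m] [Fintype n] [Fintype o]
    {F : 𝕜 → Matrix m n 𝕜} {F' : Matrix m n 𝕜} {t : 𝕜} (hF : HasDerivAt F F' t)
    (X : Matrix l m 𝕜) (Y : Matrix n o 𝕜) :
    HasDerivAt (fun t => X * F t * Y) (X * F' * Y) t :=
  ((mulRightLinearMap l 𝕜 Y ∘ₗ mulLeftLinearMap n 𝕜 X).toContinuousLinearMap.hasFDerivAt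
    ).comp_hasDerivAt t hF

section

variable {n : Type*} [Fintype n] [DecidableEq n]

theorem HasDerivAt.matrix_det {𝕜 : Type*} [NontriviallyNormedField 𝕜] [CompleteSpace 𝕜]
    {h : 𝕜 → Matrix n n 𝕜} {h' : Matrix n n 𝕜} {t : 𝕜} (hh : HasDerivAt h h' t) :
    HasDerivAt (fun t => (h t).det) (adjugate (h t) * h').trace t :=
  hasDerivAt_det_of_entries fun i j =>
    (entryLinearMap 𝕜 𝕜 i j).toContinuousLinearMap.hasFDerivAt.comp_hasDerivAt t hh

theorem HasDerivAt.log_det {h : ℝ → Matrix n n ℝ} {h' : Matrix n n ℝ} {t : ℝ}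
    (hh : HasDerivAt h h' t) (hdet : (h t).det ≠ 0) :
    HasDerivAt (fun t => Real.log (h t).det) ((h t)⁻¹ * h').trace t := by
  have hlog := (Real.hasDerivAt_log hdet).comp t hh.matrix_det
  rwa [inv_def, Ring.inverse_eq_inv', smul_mul, trace_smul, smul_eq_mul]

theorem HasDerivAt.matrix_inv {K : Type*} [RCLike K] {F : K → Matrix n n K} {F' : Matrix n n K}
    {t : K} (hF : HasDerivAt F F' t) (hFt : IsUnit (F t)) :
    HasDerivAt (fun t => (F t)⁻¹) (-((F t)⁻¹ * F' * (F t)⁻¹)) t := by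
  have hinv := hasFDerivAt_ringInverse (𝕜 := K) hFt.unit
  rw [coe_units_inv, hFt.unit_spec] at hinv
  rw [show (fun t => (F t)⁻¹) = Ring.inverse ∘ F from funext fun t => nonsing_inv_eq_ringInverse _]
  have hcomp := hinv.comp_hasDerivAt t hF
  simp only [_root_.neg_apply, ContinuousLinearMap.mulLeftRight_apply] at hcomp
  exact hcomp

end

theorem DA_criterion_directional_derivative_general
    (p s : ℕ) (A : Matrix (Fin p) (Fin s) ℝ) (hA : A.rank = s)
    (M N : Matrix (Fin p) (Fin p) ℝ) (hM : M.PosDef)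
    (g : ℝ → ℝ)
    (hg : ∀ t, g t = -Real.log (Aᵀ * ((1 - t) • M + t • N)⁻¹ * A).det) :
    HasDerivAt g
      ((M⁻¹ * A * (Aᵀ * M⁻¹ * A)⁻¹ * Aᵀ * M⁻¹ * N).trace - (s : ℝ)) 0 := by
  have hB : (Aᵀ * M⁻¹ * A).PosDef := hM.inv.transpose_mul_mul_of_rank_eq_card (by simpa using hA)
  have := hM.isUnit.invertible
  have := hB.isUnit.invertible
  have hpath : HasDerivAt (fun t : ℝ => (1 - t) • M + t • N) (N - M) 0 := by
    have hline := AffineMap.hasDerivAt_lineMap (a := M) (b := N) (x := (0 : ℝ))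
    rwa [show ⇑(AffineMap.lineMap M N) = fun t : ℝ => (1 - t) • M + t • N from
      funext (AffineMap.lineMap_apply_module M N)] at hline
  have hinv := hpath.matrix_inv (by simpa using hM.isUnit)
  have hlog := (hinv.matrix_const_mul_mul_const Aᵀ A).log_det (by simpa using hB.det_pos.ne')
  simp only [sub_zero, one_smul, zero_smul, add_zero, Matrix.mul_neg, Matrix.neg_mul, trace_neg,
    trace_inv_mul_transpose_mul_inv_sub_mul_inv_mul, Fintype.card_fin] at hlog
  rw [funext hg, ← neg_neg (_ - (s : ℝ))]
  exact hlog.neg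

/-- Directional derivative of the `D_A`-criterion along the segment from `M`
toward `N`: the derivative at `t = 0` of `t ↦ -log det(Aᵀ ((1-t)M + tN)⁻¹ A)`
is `trace(M⁻¹ A (Aᵀ M⁻¹ A)⁻¹ Aᵀ M⁻¹ N) - s`. -/
theorem DA_criterion_directional_derivative
    (p s : ℕ) (hs : 0 < s) (hsp : s < p)
    (A : Matrix (Fin p) (Fin s) ℝ) (hA : A.rank = s)
    (M N : Matrix (Fin p) (Fin p) ℝ) (hM : M.PosDef) (hN : N.PosSemidef)
    (g : ℝ → ℝ)
    (hg : ∀ t, g t = -Real.log (Aᵀ * ((1 - t) • M + t • N)⁻¹ * A).det) :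
    HasDerivAt g
      ((M⁻¹ * A * (Aᵀ * M⁻¹ * A)⁻¹ * Aᵀ * M⁻¹ * N).trace - (s : ℝ)) 0 :=
  DA_criterion_directional_derivative_general p s A hA M N hM g hg
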